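/- arXiv:2509.14102 — 2 statements merged into one kernel-verified Lean document; each statement's English description precedes it below -/
import Mathlib

section
/- Implementability with generalized continuation: fix H₀ ≥ 0 and ΔH ≥ 0 and define the generalized creator objective Π_g(μ; B) = α·μ·(m + H₀ + ΔH·P(μ)) + B·P(μ) − c(μ). Suppose μFB ∈ [a,b] satisfies the planner first-order condition m + H₀ + ΔH·P(μFB) + μFB·ΔH·P'(μFB) = c'(μFB). Define B* = (m + H₀ + ΔH·P(μFB) + μFB·ΔH·P'(μFB)) · (1−α) / P'(μFB). Then B* ≥ 0 and μFB satisfies the private first-order condition α·(m + H₀ + ΔH·P(μFB)) + α·μFB·ΔH·P'(μFB) + B*·P'(μFB) = c'(μFB); and if the gap function Δ_g(μ) = c'(μ) − (α·(m + H₀ + ΔH·P(μ)) + α·μ·ΔH·P'(μ) + B*·P'(μ)) is strictly increasing on [a,b], then μFB is the unique maximizer of Π_g(·; B*) on [a,b]. -/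
/-- The binomial-tail (pass-probability) function:
`P(μ) = ∑_{k=s}^{q} (q choose k) · μ^k · (1−μ)^{q−k}`. -/
noncomputable def binTail (q s : ℕ) (μ : ℝ) : ℝ :=
  ∑ k ∈ Finset.Icc s q, (q.choose k : ℝ) * μ ^ k * (1 - μ) ^ (q - k)

/-- The binomial tail as a polynomial: a sum of Bernstein polynomials. -/
noncomputable def binTailPoly (q s : ℕ) : Polynomial ℝ :=
  ∑ k ∈ Finset.Icc s q, bernsteinPolynomial ℝ q k

lemma binTail_eq_eval (q s : ℕ) : binTail q s = fun μ => (binTailPoly q s).eval μ := by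
  funext μ
  simp [binTail, binTailPoly, Polynomial.eval_finset_sum, bernsteinPolynomial, mul_assoc]

lemma binTailPoly_derivative (q s : ℕ) (hs : 1 ≤ s) (hsq : s ≤ q) :
    Polynomial.derivative (binTailPoly q s)
      = (q : ℝ) • bernsteinPolynomial ℝ (q - 1) (s - 1) := by
  obtain ⟨t, rfl⟩ : ∃ t, q = t + 1 := ⟨q - 1, by omega⟩
  obtain ⟨j, rfl⟩ : ∃ j, s = j + 1 := ⟨s - 1, by omega⟩
  rw [binTailPoly, map_sum]
  have h1 : ∀ k ∈ Finset.Icc (j+1) (t+1), Polynomial.derivative (bernsteinPolynomial ℝ (t+1) k)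
      = ((t+1 : ℕ) : ℝ) • (bernsteinPolynomial ℝ t (k-1) - bernsteinPolynomial ℝ t k) := by
    intro k hk
    simp only [Finset.mem_Icc] at hk
    obtain ⟨ν, rfl⟩ : ∃ ν, k = ν + 1 := ⟨k - 1, by omega⟩
    rw [bernsteinPolynomial.derivative_succ]
    simp [Polynomial.smul_eq_C_mul, Polynomial.C_eq_natCast]
  rw [Finset.sum_congr rfl h1, ← Finset.smul_sum]
  congr 1
  have he : Finset.Icc (j+1) (t+1) = Finset.Ico (j+1) (t+2) := by
    ext x; simp [Nat.lt_succ_iff]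
  rw [he, Finset.sum_Ico_eq_sum_range]
  have h3 : ∀ i ∈ Finset.range (t + 2 - (j+1)),
      bernsteinPolynomial ℝ t ((j + 1 + i) - 1) - bernsteinPolynomial ℝ t (j + 1 + i)
      = bernsteinPolynomial ℝ t (j + i) - bernsteinPolynomial ℝ t (j + (i + 1)) := by
    intro i _
    congr 2 <;> omega
  rw [Finset.sum_congr rfl h3, Finset.sum_range_sub' (fun i => bernsteinPolynomial ℝ t (j + i))]
  rw [bernsteinPolynomial.eq_zero_of_lt (R := ℝ) (by omega : t < j + (t + 2 - (j+1)))]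
  simp

lemma binTail_hasDerivAt (q s : ℕ) (μ : ℝ) :
    HasDerivAt (binTail q s) (deriv (binTail q s) μ) μ := by
  rw [binTail_eq_eval]
  exact ((binTailPoly q s).differentiableAt).hasDerivAt

lemma deriv_binTail (q s : ℕ) (hs : 1 ≤ s) (hsq : s ≤ q) (μ : ℝ) :
    deriv (binTail q s) μ
      = (q : ℝ) * ((q-1).choose (s-1) : ℝ) * μ ^ (s-1) * (1 - μ) ^ (q - s) := by
  rw [binTail_eq_eval, Polynomial.deriv, binTailPoly_derivative q s hs hsq]
  have : (q-1) - (s-1) = q - s := by omega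
  simp [bernsteinPolynomial, this, mul_assoc]

lemma deriv_binTail_pos (q s : ℕ) (hq : 1 ≤ q) (hs : 1 ≤ s) (hsq : s ≤ q)
    {μ : ℝ} (h0 : 0 < μ) (h1 : μ < 1) : 0 < deriv (binTail q s) μ := by
  rw [deriv_binTail q s hs hsq]
  have hc : 0 < ((q-1).choose (s-1) : ℝ) := by
    exact_mod_cast Nat.choose_pos (by omega)
  have : (0:ℝ) < q := by exact_mod_cast hq
  have h1' : (0:ℝ) < 1 - μ := by linarith
  positivity

lemma binTail_nonneg (q s : ℕ) {μ : ℝ} (h0 : 0 ≤ μ) (h1 : μ ≤ 1) : 0 ≤ binTail q s μ := by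
  unfold binTail
  apply Finset.sum_nonneg
  intro k _
  have : (0:ℝ) ≤ 1 - μ := by linarith
  positivity

/-- Implementability with generalized continuation: with baseline
continuation `H₀ ≥ 0` and prize spread `ΔH ≥ 0`, generalized objective
`Π_g(μ; B) = α·μ·(m + H₀ + ΔH·P(μ)) + B·P(μ) − c(μ)`, if `μFB ∈ [a,b]` satisfies
`m + H₀ + ΔH·P(μFB) + μFB·ΔH·P'(μFB) = c'(μFB)` and
`B* = (m + H₀ + ΔH·P(μFB) + μFB·ΔH·P'(μFB))·(1−α)/P'(μFB)`, then `B* ≥ 0`, `μFB`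
satisfies the private first-order condition, and if the generalized gap function formed
with `B*` is strictly increasing on `[a,b]`, then `μFB` is the unique maximizer of
`Π_g(·; B*)` on `[a,b]`. -/
theorem implementability_generalized_continuation (q s : ℕ)
    (hq : 1 ≤ q) (hs : 1 ≤ s) (hsq : s ≤ q)
    (α m a b : ℝ) (hα0 : 0 < α) (hα1 : α ≤ 1) (hm : 0 ≤ m)
    (ha : 0 < a) (hab : a < b) (hb : b < 1)
    (c : ℝ → ℝ) (U : Set ℝ) (hU : IsOpen U) (hsub : Set.Icc a b ⊆ U)
    (hc : ContDiffOn ℝ 2 c U)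
    (H₀ ΔH : ℝ) (hH₀ : 0 ≤ H₀) (hΔH : 0 ≤ ΔH)
    (μFB : ℝ) (hmem : μFB ∈ Set.Icc a b)
    (hFOC : m + H₀ + ΔH * binTail q s μFB + μFB * ΔH * deriv (binTail q s) μFB
        = deriv c μFB)
    (Bstar : ℝ)
    (hBstar : Bstar =
      (m + H₀ + ΔH * binTail q s μFB + μFB * ΔH * deriv (binTail q s) μFB)
        * (1 - α) / deriv (binTail q s) μFB) :
    0 ≤ Bstar ∧
    (α * (m + H₀ + ΔH * binTail q s μFB) + α * μFB * ΔH * deriv (binTail q s) μFB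
        + Bstar * deriv (binTail q s) μFB = deriv c μFB) ∧
    (StrictMonoOn
        (fun μ => deriv c μ -
          (α * (m + H₀ + ΔH * binTail q s μ) + α * μ * ΔH * deriv (binTail q s) μ
            + Bstar * deriv (binTail q s) μ)) (Set.Icc a b) →
      ∀ μ ∈ Set.Icc a b, μ ≠ μFB →
        α * μ * (m + H₀ + ΔH * binTail q s μ) + Bstar * binTail q s μ - c μ <
          α * μFB * (m + H₀ + ΔH * binTail q s μFB) + Bstar * binTail q s μFB - c μFB) := by
  have hμ0 : 0 < μFB := lt_of_lt_of_le ha hmem.1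
  have hμ1 : μFB < 1 := lt_of_le_of_lt hmem.2 hb
  have hp : 0 < deriv (binTail q s) μFB := deriv_binTail_pos q s hq hs hsq hμ0 hμ1
  have hPnn : 0 ≤ binTail q s μFB := binTail_nonneg q s hμ0.le hμ1.le
  have hXnn : 0 ≤ m + H₀ + ΔH * binTail q s μFB + μFB * ΔH * deriv (binTail q s) μFB := by
    have h1 : 0 ≤ ΔH * binTail q s μFB := mul_nonneg hΔH hPnn
    have h2 : 0 ≤ μFB * ΔH * deriv (binTail q s) μFB :=
      mul_nonneg (mul_nonneg hμ0.le hΔH) hp.le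
    linarith
  have hB0 : 0 ≤ Bstar := by
    rw [hBstar]
    exact div_nonneg (mul_nonneg hXnn (by linarith)) hp.le
  have hBp : Bstar * deriv (binTail q s) μFB =
      (m + H₀ + ΔH * binTail q s μFB + μFB * ΔH * deriv (binTail q s) μFB) * (1 - α) := by
    rw [hBstar]
    field_simp
  have hpriv : α * (m + H₀ + ΔH * binTail q s μFB) + α * μFB * ΔH * deriv (binTail q s) μFB
      + Bstar * deriv (binTail q s) μFB = deriv c μFB := by
    rw [hBp]
    linear_combination hFOC
  refine ⟨hB0, hpriv, ?_⟩
  intro hSM μ hμmem hμne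
  set Δ : ℝ → ℝ := fun μ => deriv c μ -
      (α * (m + H₀ + ΔH * binTail q s μ) + α * μ * ΔH * deriv (binTail q s) μ
        + Bstar * deriv (binTail q s) μ) with hΔdef
  have hΔFB : Δ μFB = 0 := by
    simp only [hΔdef]
    linarith
  set Pig : ℝ → ℝ := fun x => α * x * (m + H₀ + ΔH * binTail q s x) + Bstar * binTail q s x - c x
    with hPigdef
  have hderiv : ∀ x ∈ U, HasDerivAt Pig (-(Δ x)) x := by
    intro x hx
    have hbd := binTail_hasDerivAt q s x
    have hcx : HasDerivAt c (deriv c x) x := by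
      have hdo : DifferentiableOn ℝ c U := hc.differentiableOn (by norm_num)
      exact ((hdo x hx).differentiableAt (hU.mem_nhds hx)).hasDerivAt
    have h1 : HasDerivAt (fun x => α * x * (m + H₀ + ΔH * binTail q s x))
        (α * (m + H₀ + ΔH * binTail q s x) + (α * x) * (ΔH * deriv (binTail q s) x)) x := by
      have h := (((hasDerivAt_id x).const_mul α).fun_mul
        ((hbd.const_mul ΔH).const_add (m + H₀)))
      refine h.congr_deriv ?_
      simp only [id_eq]
      ring
    have h2 := (h1.fun_add (hbd.const_mul Bstar)).fun_sub hcx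
    refine h2.congr_deriv ?_
    simp only [hΔdef]
    ring
  have hcont : ContinuousOn Pig (Set.Icc a b) := fun x hx =>
    ((hderiv x (hsub hx)).continuousAt).continuousWithinAt
  rcases hμne.lt_or_gt with hlt | hgt
  · -- μ < μFB : Pig strictly increasing on [a, μFB]
    have hmono : StrictMonoOn Pig (Set.Icc a μFB) := by
      apply strictMonoOn_of_deriv_pos (convex_Icc a μFB)
        (hcont.mono (Set.Icc_subset_Icc le_rfl hmem.2))
      intro x hx
      rw [interior_Icc] at hx
      have hxab : x ∈ Set.Icc a b := ⟨hx.1.le, hx.2.le.trans hmem.2⟩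
      rw [(hderiv x (hsub hxab)).deriv]
      have hΔlt : Δ x < Δ μFB := hSM hxab hmem hx.2
      linarith [hΔFB]
    exact hmono ⟨hμmem.1, hlt.le⟩ ⟨hmem.1, le_rfl⟩ hlt
  · -- μFB < μ : Pig strictly decreasing on [μFB, b]
    have hanti : StrictAntiOn Pig (Set.Icc μFB b) := by
      apply strictAntiOn_of_deriv_neg (convex_Icc μFB b)
        (hcont.mono (Set.Icc_subset_Icc hmem.1 le_rfl))
      intro x hx
      rw [interior_Icc] at hx
      have hxab : x ∈ Set.Icc a b := ⟨hmem.1.trans hx.1.le, hx.2.le⟩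
      rw [(hderiv x (hsub hxab)).deriv]
      have hΔgt : Δ μFB < Δ x := hSM hmem hxab hx.1
      linarith [hΔFB]
    exact hanti ⟨le_rfl, hmem.2⟩ ⟨hgt.le, hμmem.2⟩ hgt
end

section
/- Implicit derivatives of the best response: define G(μ, m) = α·(m + H·P(μ)) + α·μ·H·P'(μ) + B·P'(μ) − c'(μ) and the gap curvature D(μ) = c''(μ) − α·H·(2·P'(μ) + μ·P''(μ)) − B·P''(μ). (i) If ν : ℝ → ℝ takes values in [a,b], is differentiable at m₀, satisfies G(ν(m), m) = 0 for all m in a neighborhood of m₀, and D(ν(m₀)) > 0, then ν'(m₀) = α / D(ν(m₀)) ≥ 0. (ii) If G_B(μ, β) = α·(m + H·P(μ)) + α·μ·H·P'(μ) + β·P'(μ) − c'(μ), and ξ : ℝ → ℝ takes values in [a,b], is differentiable at β₀, satisfies G_B(ξ(β), β) = 0 for all β in a neighborhood of β₀, and D_{β₀}(ξ(β₀)) > 0 where D_β(μ) = c''(μ) − α·H·(2·P'(μ) + μ·P''(μ)) − β·P''(μ), then ξ'(β₀) = P'(ξ(β₀)) / D_{β₀}(ξ(β₀)) ≥ 0.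 -/
open Finset
lemma hasDerivAt_one_sub_pow (n : ℕ) (μ : ℝ) :
    HasDerivAt (fun x : ℝ => (1 - x) ^ n) (-((n : ℝ) * (1 - μ) ^ (n - 1))) μ := by
  have h := (hasDerivAt_pow n (1 - μ)).comp μ ((hasDerivAt_id μ).const_sub 1)
  simpa [mul_comm, Function.comp_def] using h

lemma term_hasDerivAt (q k : ℕ) (μ : ℝ) :
    HasDerivAt (fun x : ℝ => (q.choose k : ℝ) * x ^ k * (1 - x) ^ (q - k))
      ((q.choose k : ℝ) * ((k : ℝ) * μ ^ (k - 1)) * (1 - μ) ^ (q - k)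
        - (q.choose k : ℝ) * μ ^ k * (((q - k : ℕ) : ℝ) * (1 - μ) ^ (q - k - 1))) μ := by
  have h1 : HasDerivAt (fun x : ℝ => (q.choose k : ℝ) * x ^ k)
      ((q.choose k : ℝ) * ((k : ℝ) * μ ^ (k - 1))) μ := (hasDerivAt_pow k μ).const_mul _
  have h := h1.mul (hasDerivAt_one_sub_pow (q - k) μ)
  exact h.congr_deriv (by ring)

lemma binTail_hasDerivAt_s19 (q s : ℕ) (hq : 1 ≤ q) (hs : 1 ≤ s) (hsq : s ≤ q) (μ : ℝ) :
    HasDerivAt (binTail q s)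
      ((q : ℝ) * ((q - 1).choose (s - 1) : ℝ) * μ ^ (s - 1) * (1 - μ) ^ (q - s)) μ := by
  set g : ℕ → ℝ := fun k => (q : ℝ) * ((q - 1).choose (k - 1) : ℝ) * μ ^ (k - 1) * (1 - μ) ^ (q - k) with hg
  have hsum : HasDerivAt (binTail q s)
      (∑ k ∈ Icc s q, ((q.choose k : ℝ) * ((k : ℝ) * μ ^ (k - 1)) * (1 - μ) ^ (q - k)
        - (q.choose k : ℝ) * μ ^ k * (((q - k : ℕ) : ℝ) * (1 - μ) ^ (q - k - 1)))) μ :=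
    HasDerivAt.fun_sum (fun k _ => term_hasDerivAt q k μ)
  have hkey : ∀ k ∈ Icc s q,
      ((q.choose k : ℝ) * ((k : ℝ) * μ ^ (k - 1)) * (1 - μ) ^ (q - k)
        - (q.choose k : ℝ) * μ ^ k * (((q - k : ℕ) : ℝ) * (1 - μ) ^ (q - k - 1)))
      = g k - g (k + 1) := by
    intro k hk
    simp only [mem_Icc] at hk
    have hk1 : 1 ≤ k := le_trans hs hk.1
    have hkq : k ≤ q := hk.2
    have h1 : q * (q - 1).choose (k - 1) = q.choose k * k := by
      have := Nat.add_one_mul_choose_eq (q - 1) (k - 1)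
      rwa [Nat.sub_add_cancel hq, Nat.sub_add_cancel hk1] at this
    have h2 : q * (q - 1).choose k = q.choose k * (q - k) := by
      have h2a := Nat.add_one_mul_choose_eq (q - 1) k
      rw [Nat.sub_add_cancel hq] at h2a
      rw [h2a, Nat.choose_succ_right_eq]
    have hr1 : (q : ℝ) * ((q - 1).choose (k - 1) : ℝ) = (q.choose k : ℝ) * (k : ℝ) := by
      exact_mod_cast h1
    have hr2 : (q : ℝ) * ((q - 1).choose k : ℝ) = (q.choose k : ℝ) * (((q - k : ℕ)) : ℝ) := by
      exact_mod_cast h2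
    have e1 : (k + 1) - 1 = k := rfl
    have e2 : q - (k + 1) = q - k - 1 := by omega
    simp only [hg, e1, e2]
    linear_combination ((1 - μ) ^ (q - k) * μ ^ (k - 1)) * hr1.symm
      - (μ ^ k * (1 - μ) ^ (q - k - 1)) * hr2.symm
  rw [Finset.sum_congr rfl hkey] at hsum
  have htel : ∑ k ∈ Icc s q, (g k - g (k + 1)) = g s - g (q + 1) := by
    rw [← Finset.Ico_add_one_right_eq_Icc, Finset.sum_Ico_eq_sum_range]
    have := Finset.sum_range_sub' (fun i => g (s + i)) (q + 1 - s)
    simp only [add_zero] at this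
    rw [show (∑ i ∈ Finset.range (q + 1 - s), (g (s + i) - g (s + i + 1)))
        = ∑ i ∈ Finset.range (q + 1 - s), ((fun i => g (s + i)) i - (fun i => g (s + i)) (i + 1))
        from by simp [add_assoc], this]
    congr 2
    omega
  have hzero : g (q + 1) = 0 := by
    have : (q - 1).choose ((q + 1) - 1) = 0 := by
      apply Nat.choose_eq_zero_of_lt; omega
    simp only [hg]
    rw [this]
    simp
  rw [htel, hzero, sub_zero] at hsum
  exact hsum

lemma binTail_contDiff (q s : ℕ) : ContDiff ℝ (⊤ : ℕ∞) (binTail q s) := by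
  have : binTail q s = fun μ => ∑ k ∈ Icc s q, (q.choose k : ℝ) * μ ^ k * (1 - μ) ^ (q - k) := rfl
  rw [this]
  apply ContDiff.sum
  intro i _
  fun_prop

lemma binTail_deriv_contDiff (q s : ℕ) : ContDiff ℝ (⊤ : ℕ∞) (deriv (binTail q s)) := by
  have := binTail_contDiff q s
  exact (contDiff_infty_iff_deriv.mp (by exact_mod_cast this)).2

/-- Implicit derivatives of the best response: with
`G(μ, m) = α·(m + H·P(μ)) + α·μ·H·P'(μ) + B·P'(μ) − c'(μ)` and gap curvature
`D(μ) = c''(μ) − α·H·(2·P'(μ) + μ·P''(μ)) − B·P''(μ)`: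
(i) if `ν` takes values in `[a,b]`, is differentiable at `m₀`, satisfies `G(ν(m), m) = 0`
for all `m` in a neighborhood of `m₀`, and `D(ν(m₀)) > 0`, then
`ν'(m₀) = α / D(ν(m₀)) ≥ 0`;
(ii) if `G_B(μ, β) = α·(m + H·P(μ)) + α·μ·H·P'(μ) + β·P'(μ) − c'(μ)` and `ξ` takes values
in `[a,b]`, is differentiable at `β₀`, satisfies `G_B(ξ(β), β) = 0` for all `β` in a
neighborhood of `β₀`, and `D_{β₀}(ξ(β₀)) > 0` where
`D_β(μ) = c''(μ) − α·H·(2·P'(μ) + μ·P''(μ)) − β·P''(μ)`, then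
`ξ'(β₀) = P'(ξ(β₀)) / D_{β₀}(ξ(β₀)) ≥ 0`. -/
theorem implicit_derivatives_best_response (q s : ℕ) (hq : 1 ≤ q) (hs : 1 ≤ s) (hsq : s ≤ q)
    (α m H B a b : ℝ) (hα0 : 0 < α) (hα1 : α ≤ 1) (hm : 0 ≤ m) (hH : 0 ≤ H) (hB : 0 ≤ B)
    (ha : 0 < a) (hab : a < b) (hb : b < 1)
    (c : ℝ → ℝ) (U : Set ℝ) (hU : IsOpen U) (hsub : Set.Icc a b ⊆ U)
    (hc : ContDiffOn ℝ 2 c U) :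
    (∀ (ν : ℝ → ℝ) (m₀ : ℝ),
      (∀ x, ν x ∈ Set.Icc a b) →
      DifferentiableAt ℝ ν m₀ →
      (∀ᶠ x in nhds m₀,
        α * (x + H * binTail q s (ν x)) + α * (ν x) * H * deriv (binTail q s) (ν x)
          + B * deriv (binTail q s) (ν x) - deriv c (ν x) = 0) →
      0 < deriv (deriv c) (ν m₀)
            - α * H * (2 * deriv (binTail q s) (ν m₀)
                + (ν m₀) * deriv (deriv (binTail q s)) (ν m₀))
            - B * deriv (deriv (binTail q s)) (ν m₀) →
      deriv ν m₀ =
          α / (deriv (deriv c) (ν m₀)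
            - α * H * (2 * deriv (binTail q s) (ν m₀)
                + (ν m₀) * deriv (deriv (binTail q s)) (ν m₀))
            - B * deriv (deriv (binTail q s)) (ν m₀)) ∧
        0 ≤ deriv ν m₀) ∧
    (∀ (ξ : ℝ → ℝ) (β₀ : ℝ),
      (∀ β, ξ β ∈ Set.Icc a b) →
      DifferentiableAt ℝ ξ β₀ →
      (∀ᶠ β in nhds β₀,
        α * (m + H * binTail q s (ξ β)) + α * (ξ β) * H * deriv (binTail q s) (ξ β)
          + β * deriv (binTail q s) (ξ β) - deriv c (ξ β) = 0) →
      0 < deriv (deriv c) (ξ β₀)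
            - α * H * (2 * deriv (binTail q s) (ξ β₀)
                + (ξ β₀) * deriv (deriv (binTail q s)) (ξ β₀))
            - β₀ * deriv (deriv (binTail q s)) (ξ β₀) →
      deriv ξ β₀ =
          deriv (binTail q s) (ξ β₀) /
            (deriv (deriv c) (ξ β₀)
              - α * H * (2 * deriv (binTail q s) (ξ β₀)
                  + (ξ β₀) * deriv (deriv (binTail q s)) (ξ β₀))
              - β₀ * deriv (deriv (binTail q s)) (ξ β₀)) ∧
        0 ≤ deriv ξ β₀) := by
  have hPc := binTail_contDiff q s
  have hP'c := binTail_deriv_contDiff q s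
  have hPdiff : Differentiable ℝ (binTail q s) := hPc.differentiable (by simp)
  have hP'diff : Differentiable ℝ (deriv (binTail q s)) := hP'c.differentiable (by simp)
  have hc1 : ContDiffOn ℝ 1 (deriv c) U := hc.deriv_of_isOpen hU (by norm_num)
  constructor
  · intro ν m₀ hmem hdiff hEv hD
    have hyU : ν m₀ ∈ U := hsub (hmem m₀)
    have hc'd : DifferentiableAt ℝ (deriv c) (ν m₀) :=
      (hc1.differentiableOn one_ne_zero).differentiableAt (hU.mem_nhds hyU)
    have hν : HasDerivAt ν (deriv ν m₀) m₀ := hdiff.hasDerivAt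
    have h1 : HasDerivAt (fun x => binTail q s (ν x))
        (deriv (binTail q s) (ν m₀) * deriv ν m₀) m₀ :=
      ((hPdiff (ν m₀)).hasDerivAt).comp m₀ hν
    have h2 : HasDerivAt (fun x => deriv (binTail q s) (ν x))
        (deriv (deriv (binTail q s)) (ν m₀) * deriv ν m₀) m₀ :=
      ((hP'diff (ν m₀)).hasDerivAt).comp m₀ hν
    have h3 : HasDerivAt (fun x => deriv c (ν x))
        (deriv (deriv c) (ν m₀) * deriv ν m₀) m₀ :=
      (hc'd.hasDerivAt).comp m₀ hν
    have hA : HasDerivAt (fun x => α * (x + H * binTail q s (ν x)))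
        (α * (1 + H * (deriv (binTail q s) (ν m₀) * deriv ν m₀))) m₀ :=
      ((hasDerivAt_id m₀).add (h1.const_mul H)).const_mul α
    have hB2 : HasDerivAt (fun x => α * ν x * H * deriv (binTail q s) (ν x))
        ((α * deriv ν m₀ * H) * deriv (binTail q s) (ν m₀)
          + (α * ν m₀ * H) * (deriv (deriv (binTail q s)) (ν m₀) * deriv ν m₀)) m₀ :=
      (((hν.const_mul α).mul_const H).mul h2)
    have hC : HasDerivAt (fun x => B * deriv (binTail q s) (ν x))
        (B * (deriv (deriv (binTail q s)) (ν m₀) * deriv ν m₀)) m₀ := h2.const_mul B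
    have hF : HasDerivAt (fun x => α * (x + H * binTail q s (ν x))
        + α * (ν x) * H * deriv (binTail q s) (ν x)
        + B * deriv (binTail q s) (ν x) - deriv c (ν x))
        (α * (1 + H * (deriv (binTail q s) (ν m₀) * deriv ν m₀))
          + ((α * deriv ν m₀ * H) * deriv (binTail q s) (ν m₀)
            + (α * ν m₀ * H) * (deriv (deriv (binTail q s)) (ν m₀) * deriv ν m₀))
          + B * (deriv (deriv (binTail q s)) (ν m₀) * deriv ν m₀)
          - deriv (deriv c) (ν m₀) * deriv ν m₀) m₀ :=
      ((hA.add hB2).add hC).sub h3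
    have hzero : deriv (fun x => α * (x + H * binTail q s (ν x))
        + α * (ν x) * H * deriv (binTail q s) (ν x)
        + B * deriv (binTail q s) (ν x) - deriv c (ν x)) m₀ = 0 := by
      have heq : (fun x => α * (x + H * binTail q s (ν x))
          + α * (ν x) * H * deriv (binTail q s) (ν x)
          + B * deriv (binTail q s) (ν x) - deriv c (ν x)) =ᶠ[nhds m₀]
          (fun _ => (0 : ℝ)) := hEv
      rw [heq.deriv_eq, deriv_const]
    have hDF := hF.deriv.symm.trans hzero
    have hmain : deriv ν m₀ = α / (deriv (deriv c) (ν m₀)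
        - α * H * (2 * deriv (binTail q s) (ν m₀)
            + (ν m₀) * deriv (deriv (binTail q s)) (ν m₀))
        - B * deriv (deriv (binTail q s)) (ν m₀)) := by
      rw [eq_div_iff hD.ne']
      linear_combination -hDF
    exact ⟨hmain, hmain ▸ div_nonneg hα0.le hD.le⟩
  · intro ξ β₀ hmem hdiff hEv hD
    have hyU : ξ β₀ ∈ U := hsub (hmem β₀)
    have hc'd : DifferentiableAt ℝ (deriv c) (ξ β₀) :=
      (hc1.differentiableOn one_ne_zero).differentiableAt (hU.mem_nhds hyU)
    have hν : HasDerivAt ξ (deriv ξ β₀) β₀ := hdiff.hasDerivAt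
    have h1 : HasDerivAt (fun x => binTail q s (ξ x))
        (deriv (binTail q s) (ξ β₀) * deriv ξ β₀) β₀ :=
      ((hPdiff (ξ β₀)).hasDerivAt).comp β₀ hν
    have h2 : HasDerivAt (fun x => deriv (binTail q s) (ξ x))
        (deriv (deriv (binTail q s)) (ξ β₀) * deriv ξ β₀) β₀ :=
      ((hP'diff (ξ β₀)).hasDerivAt).comp β₀ hν
    have h3 : HasDerivAt (fun x => deriv c (ξ x))
        (deriv (deriv c) (ξ β₀) * deriv ξ β₀) β₀ :=
      (hc'd.hasDerivAt).comp β₀ hν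
    have hA : HasDerivAt (fun x => α * (m + H * binTail q s (ξ x)))
        (α * (0 + H * (deriv (binTail q s) (ξ β₀) * deriv ξ β₀))) β₀ :=
      ((hasDerivAt_const β₀ m).add (h1.const_mul H)).const_mul α
    have hB2 : HasDerivAt (fun x => α * ξ x * H * deriv (binTail q s) (ξ x))
        ((α * deriv ξ β₀ * H) * deriv (binTail q s) (ξ β₀)
          + (α * ξ β₀ * H) * (deriv (deriv (binTail q s)) (ξ β₀) * deriv ξ β₀)) β₀ :=
      (((hν.const_mul α).mul_const H).mul h2)
    have hC : HasDerivAt (fun x => x * deriv (binTail q s) (ξ x))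
        (1 * deriv (binTail q s) (ξ β₀)
          + β₀ * (deriv (deriv (binTail q s)) (ξ β₀) * deriv ξ β₀)) β₀ :=
      (hasDerivAt_id β₀).mul h2
    have hF : HasDerivAt (fun x => α * (m + H * binTail q s (ξ x))
        + α * (ξ x) * H * deriv (binTail q s) (ξ x)
        + x * deriv (binTail q s) (ξ x) - deriv c (ξ x))
        (α * (0 + H * (deriv (binTail q s) (ξ β₀) * deriv ξ β₀))
          + ((α * deriv ξ β₀ * H) * deriv (binTail q s) (ξ β₀)
            + (α * ξ β₀ * H) * (deriv (deriv (binTail q s)) (ξ β₀) * deriv ξ β₀))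
          + (1 * deriv (binTail q s) (ξ β₀)
            + β₀ * (deriv (deriv (binTail q s)) (ξ β₀) * deriv ξ β₀))
          - deriv (deriv c) (ξ β₀) * deriv ξ β₀) β₀ :=
      ((hA.add hB2).add hC).sub h3
    have hzero : deriv (fun x => α * (m + H * binTail q s (ξ x))
        + α * (ξ x) * H * deriv (binTail q s) (ξ x)
        + x * deriv (binTail q s) (ξ x) - deriv c (ξ x)) β₀ = 0 := by
      have heq : (fun x => α * (m + H * binTail q s (ξ x))
          + α * (ξ x) * H * deriv (binTail q s) (ξ x)
          + x * deriv (binTail q s) (ξ x) - deriv c (ξ x)) =ᶠ[nhds β₀]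
          (fun _ => (0 : ℝ)) := hEv
      rw [heq.deriv_eq, deriv_const]
    have hDF := hF.deriv.symm.trans hzero
    have hp1 : 0 ≤ deriv (binTail q s) (ξ β₀) := by
      rw [(binTail_hasDerivAt_s19 q s hq hs hsq (ξ β₀)).deriv]
      have h0 : (0 : ℝ) ≤ ξ β₀ := le_trans ha.le (hmem β₀).1
      have h1' : (0 : ℝ) ≤ 1 - ξ β₀ := by
        have := (hmem β₀).2
        linarith
      exact mul_nonneg (mul_nonneg (mul_nonneg (by positivity) (by positivity))
        (pow_nonneg h0 _)) (pow_nonneg h1' _)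
    have hmain : deriv ξ β₀ = deriv (binTail q s) (ξ β₀) / (deriv (deriv c) (ξ β₀)
        - α * H * (2 * deriv (binTail q s) (ξ β₀)
            + (ξ β₀) * deriv (deriv (binTail q s)) (ξ β₀))
        - β₀ * deriv (deriv (binTail q s)) (ξ β₀)) := by
      rw [eq_div_iff hD.ne']
      linear_combination -hDF
    exact ⟨hmain, hmain ▸ div_nonneg hp1 hD.le⟩
end
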